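/- (Theorem 6) Let Γ and Σ be disjoint finite simple graphs, let Σ_{c_1}, …, Σ_{c_k} be induced subgraphs of Σ (their vertex sets need not be disjoint), fix distinct vertices p_1, …, p_k ∈ Γ, and let Γ^Σ be the graph consisting of Γ, Σ, and additional edges joining p_l to every vertex of Σ_{c_l} for each l = 1, …, k. Assume every vertex of Γ^Σ has positive degree. Suppose a nonzero function f on V(Σ) satisfies (1/n_i)·∑_{j ∈ Σ, j ∼ i} f(j) = (1−λ)·f(i) for all i ∈ Σ and some real λ, where n_i is the degree of i in Γ^Σ, and moreover ∑_{j ∈ Σ_{c_l}} f(j) = 0 for every l = 1, …, k. Then the function equal to f on V(Σ) and 0 on V(Γ) is an eigenfunction of the normalized Laplacian of Γ^Σ for the eigenvalue λ. -/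

import Mathlib

open Finset

variable {V W : Type*}

/-- `f` is an eigenfunction of the normalized graph Laplacian of `G` for the eigenvalue `μ`:
`f` is nonzero and `∑_{j ∼ i} f j = (1 - μ) · deg i · f i` for every vertex `i`. -/
def SimpleGraph.IsLapEigenfunction [Fintype V] (G : SimpleGraph V) [DecidableRel G.Adj]
    (μ : ℝ) (f : V → ℝ) : Prop :=
  f ≠ 0 ∧ ∀ i, ∑ j ∈ G.neighborFinset i, f j = (1 - μ) * (G.degree i : ℝ) * f i

/-- `μ` is an eigenvalue of the normalized graph Laplacian of `G`. -/
def SimpleGraph.IsLapEigenvalue [Fintype V] (G : SimpleGraph V) [DecidableRel G.Adj]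
    (μ : ℝ) : Prop :=
  ∃ f : V → ℝ, G.IsLapEigenfunction μ f

/-- Coupling: the disjoint union of `G` and `H` together with additional edges joining,
for each `l : Fin k`, the vertex `p l` of `G` to every vertex of `H` lying in `c l`. -/
def SimpleGraph.coupleMulti [DecidableEq V] {k : ℕ} (G : SimpleGraph V) (H : SimpleGraph W)
    (p : Fin k → V) (c : Fin k → Finset W) : SimpleGraph (V ⊕ W) where
  Adj x y :=
    match x, y with
    | Sum.inl a, Sum.inl b => G.Adj a b
    | Sum.inl a, Sum.inr b => ∃ l, a = p l ∧ b ∈ c l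
    | Sum.inr a, Sum.inl b => ∃ l, b = p l ∧ a ∈ c l
    | Sum.inr a, Sum.inr b => H.Adj a b
  symm := by
    constructor
    rintro (a | a) (b | b) h
    · exact G.symm.symm _ _ h
    · exact h
    · exact h
    · exact H.symm.symm _ _ h
  loopless := by
    constructor
    rintro (a | a) h
    · exact G.loopless.irrefl a h
    · exact H.loopless.irrefl a h

instance [DecidableEq V] [DecidableEq W] {k : ℕ} (G : SimpleGraph V) (H : SimpleGraph W)
    [DecidableRel G.Adj] [DecidableRel H.Adj] (p : Fin k → V) (c : Fin k → Finset W) :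
    DecidableRel (G.coupleMulti H p c).Adj := fun x y =>
  match x, y with
  | Sum.inl a, Sum.inl b => inferInstanceAs (Decidable (G.Adj a b))
  | Sum.inl a, Sum.inr b => inferInstanceAs (Decidable (∃ l, a = p l ∧ b ∈ c l))
  | Sum.inr a, Sum.inl b => inferInstanceAs (Decidable (∃ l, b = p l ∧ a ∈ c l))
  | Sum.inr a, Sum.inr b => inferInstanceAs (Decidable (H.Adj a b))

/-- **Theorem 6.** Join, for each `l`, the vertex `p l` of `Γ` to every
vertex of the induced subgraph `Σ_{c l}` (vertex set `c l`) of a disjoint graph `Σ`.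
If a nonzero `f` on `V(Σ)` satisfies the motif eigenvalue equation for `λ` (degrees taken
in the coupled graph) and `∑_{j ∈ c l} f j = 0` for every `l`, then the extension of `f`
by `0` on `V(Γ)` is an eigenfunction of the normalized Laplacian of the coupled graph for
the eigenvalue `λ`. -/
theorem coupleMulti_isLapEigenfunction
    {V W : Type*} [Fintype V] [Fintype W] [DecidableEq V] [DecidableEq W]
    (G : SimpleGraph V) (H : SimpleGraph W) [DecidableRel G.Adj] [DecidableRel H.Adj]
    (k : ℕ) (p : Fin k → V) (hp : Function.Injective p) (c : Fin k → Finset W) (lam : ℝ)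
    (hdeg : ∀ x, 0 < (G.coupleMulti H p c).degree x)
    (f : W → ℝ) (hne : f ≠ 0)
    (heq : ∀ i : W, ∑ j ∈ H.neighborFinset i, f j
      = (1 - lam) * ((G.coupleMulti H p c).degree (Sum.inr i) : ℝ) * f i)
    (hc : ∀ l, ∑ j ∈ c l, f j = 0) :
    (G.coupleMulti H p c).IsLapEigenfunction lam (Sum.elim 0 f) := by
  classical
  constructor
  · intro h
    apply hne
    funext w
    exact congrFun h (Sum.inr w)
  · intro i
    have hsum : ∀ x : V ⊕ W, ∑ j ∈ (G.coupleMulti H p c).neighborFinset x,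
        Sum.elim (0 : V → ℝ) f j
        = ∑ b : W, if (G.coupleMulti H p c).Adj x (Sum.inr b) then f b else 0 := by
      intro x
      rw [SimpleGraph.neighborFinset_eq_filter, Finset.sum_filter, Fintype.sum_sum_type]
      simp
    rcases i with a | i
    · rw [hsum]
      simp only [Sum.elim_inl, Pi.zero_apply, mul_zero]
      by_cases ha : ∃ l, a = p l
      · obtain ⟨l, rfl⟩ := ha
        have key : ∀ b : W, ((G.coupleMulti H p c).Adj (Sum.inl (p l)) (Sum.inr b)) ↔ b ∈ c l := by
          intro b
          constructor
          · rintro ⟨l', hl', hb⟩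
            rwa [hp hl']
          · intro hb; exact ⟨l, rfl, hb⟩
        calc ∑ b : W, (if (G.coupleMulti H p c).Adj (Sum.inl (p l)) (Sum.inr b) then f b else 0)
            = ∑ b ∈ c l, f b := by
              rw [← Finset.sum_filter]
              apply Finset.sum_congr _ (fun _ _ => rfl)
              ext b; simp [key b]
          _ = 0 := hc l
      · have hnone : ∀ b : W, ¬ (G.coupleMulti H p c).Adj (Sum.inl a) (Sum.inr b) := by
          rintro b ⟨l, hl, _⟩; exact ha ⟨l, hl⟩
        simp [hnone]
    · rw [hsum]
      simp only [Sum.elim_inr]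
      rw [← heq i, ← Finset.sum_filter, SimpleGraph.neighborFinset_eq_filter]
      apply Finset.sum_congr _ (fun _ _ => rfl)
      ext b
      simp only [Finset.mem_filter]
      exact Iff.rfl
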